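/- Let ρ = (1/4)(I₉ − Σ_{i=0}^{4} |ψ_i⟩⟨ψ_i|) where ψ_i are the TILES UPB vectors in ℂ³ ⊗ ℂ³. Then ρ is a state (positive semidefinite with trace 1) and ρ is positive under partial transpose: (id ⊗ T)ρ ≥ 0. -/

import Mathlib

open Matrix ComplexOrder

/-- Standard basis vector `|i⟩` of `ℂ³`. -/
noncomputable def e (i : Fin 3) : Fin 3 → ℂ := Pi.single i 1

/-- Tensor product of two vectors of `ℂ³`, as a vector of `ℂ³ ⊗ ℂ³ ≅ ℂ⁹`. -/
def tens (a b : Fin 3 → ℂ) : Fin 3 × Fin 3 → ℂ := fun p => a p.1 * b p.2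

/-- The five TILES vectors in `ℂ³ ⊗ ℂ³`. -/
noncomputable def tiles : Fin 5 → (Fin 3 × Fin 3 → ℂ)
  | 0 => (1 / Real.sqrt 2 : ℝ) • tens (e 0) (e 0 - e 1)
  | 1 => (1 / Real.sqrt 2 : ℝ) • tens (e 0 - e 1) (e 2)
  | 2 => (1 / Real.sqrt 2 : ℝ) • tens (e 2) (e 1 - e 2)
  | 3 => (1 / Real.sqrt 2 : ℝ) • tens (e 1 - e 2) (e 0)
  | 4 => (1 / 3 : ℝ) • tens (e 0 + e 1 + e 2) (e 0 + e 1 + e 2)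

/-- The TILES state `ρ = (1/4)(I₉ − Σᵢ |ψᵢ⟩⟨ψᵢ|)`. -/
noncomputable def tilesState : Matrix (Fin 3 × Fin 3) (Fin 3 × Fin 3) ℂ :=
  (1 / 4 : ℂ) •
    (1 - ∑ i : Fin 5, Matrix.vecMulVec (tiles i) (fun q => (starRingEnd ℂ) (tiles i q)))

/-- Partial transpose on the second tensor factor. -/
def partialTranspose (ρ : Matrix (Fin 3 × Fin 3) (Fin 3 × Fin 3) ℂ) :
    Matrix (Fin 3 × Fin 3) (Fin 3 × Fin 3) ℂ :=
  Matrix.of fun p q => ρ (p.1, q.2) (q.1, p.2)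


/-!
The TILES vectors are orthonormal, so `P = ∑ᵢ |ψᵢ⟩⟨ψᵢ|` is an orthogonal projection of rank 5;
hence `ρ = (1 - P)/4` is positive semidefinite with trace `(9 - 5)/4 = 1`. Each `ψᵢ` is a product
vector `a ⊗ b` with `b` real, and the partial transpose maps `|a ⊗ b⟩⟨a ⊗ b|` to
`|a ⊗ b̄⟩⟨a ⊗ b̄|`, so it fixes every `|ψᵢ⟩⟨ψᵢ|` and therefore `ρ`.
-/

namespace Matrix

variable {m n R : Type*}

theorem sum_vecMulVec_star [Fintype n] [Semiring R] [StarRing R] (v : n → m → R) :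
    ∑ i, vecMulVec (v i) (star (v i)) = (of v)ᵀ * (of v)ᵀᴴ := by
  ext p q
  simp [mul_apply, vecMulVec_apply, Matrix.sum_apply]

variable [Fintype m] [Fintype n]

theorem isStarProjection_mul_conjTranspose [Semiring R] [StarRing R] [DecidableEq n]
    {V : Matrix m n R} (hV : Vᴴ * V = 1) : IsStarProjection (V * Vᴴ) where
  isIdempotentElem := by
    rw [IsIdempotentElem, Matrix.mul_assoc, ← Matrix.mul_assoc Vᴴ, hV, Matrix.one_mul]
  isSelfAdjoint := isHermitian_mul_conjTranspose_self V

theorem posSemidef_one_sub_mul_conjTranspose [CommRing R] [PartialOrder R] [StarRing R]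
    [StarOrderedRing R] [DecidableEq m] [DecidableEq n] {V : Matrix m n R} (hV : Vᴴ * V = 1) :
    (1 - V * Vᴴ).PosSemidef := by
  have hP := (isStarProjection_mul_conjTranspose hV).one_sub
  have hPP : (1 - V * Vᴴ)ᴴ * (1 - V * Vᴴ) = 1 - V * Vᴴ := by
    rw [← star_eq_conjTranspose, hP.isSelfAdjoint.star_eq, hP.isIdempotentElem.eq]
  exact hPP ▸ posSemidef_conjTranspose_mul_self _

end Matrix

theorem tiles_orthonormal : (of tiles)ᵀᴴ * (of tiles)ᵀ = 1 := by
  have hsqrt : ((Real.sqrt 2 : ℝ) : ℂ)⁻¹ * ((Real.sqrt 2 : ℝ) : ℂ)⁻¹ = 1 / 2 := by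
    rw [← mul_inv, ← Complex.ofReal_mul, Real.mul_self_sqrt zero_le_two]
    norm_num
  ext i j
  fin_cases i <;> fin_cases j <;>
    simp [mul_apply, tiles, tens, e, Fintype.sum_prod_type, Fin.sum_univ_three] <;>
    norm_num [hsqrt]

theorem tilesState_eq : tilesState = (1 / 4 : ℂ) • (1 - (of tiles)ᵀ * (of tiles)ᵀᴴ) := by
  rw [← sum_vecMulVec_star]
  rfl

theorem star_tens (a b : Fin 3 → ℂ) : star (tens a b) = tens (star a) (star b) := by
  ext p
  simp [tens]

theorem partialTranspose_vecMulVec_tens (a b c d : Fin 3 → ℂ) :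
    partialTranspose (vecMulVec (tens a b) (tens c d)) = vecMulVec (tens a d) (tens c b) := by
  ext p q
  simp only [partialTranspose, of_apply, vecMulVec_apply, tens]
  ring

theorem partialTranspose_vecMulVec_tens_star {a b : Fin 3 → ℂ} (hb : star b = b) :
    partialTranspose (vecMulVec (tens a b) (star (tens a b))) =
      vecMulVec (tens a b) (star (tens a b)) := by
  rw [star_tens, partialTranspose_vecMulVec_tens, hb]

theorem tiles_eq_tens (i : Fin 5) : ∃ a b, star b = b ∧ tiles i = tens a b := by
  have he (j : Fin 3) : star (e j) = e j := by simp [e]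
  have hsmul (c : ℝ) (a b : Fin 3 → ℂ) : c • tens a b = tens (c • a) b := by
    funext p
    exact (smul_mul_assoc c (a p.1) (b p.2)).symm
  fin_cases i
  · exact ⟨_, _, by simp [he], hsmul _ _ _⟩
  · exact ⟨_, _, he 2, hsmul _ _ _⟩
  · exact ⟨_, _, by simp [he], hsmul _ _ _⟩
  · exact ⟨_, _, he 0, hsmul _ _ _⟩
  · exact ⟨_, _, by simp [he], hsmul _ _ _⟩

def partialTransposeLinearMap :
    Matrix (Fin 3 × Fin 3) (Fin 3 × Fin 3) ℂ →ₗ[ℂ] Matrix (Fin 3 × Fin 3) (Fin 3 × Fin 3) ℂ where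
  toFun := partialTranspose
  map_add' _ _ := rfl
  map_smul' _ _ := rfl

theorem partialTranspose_one : partialTranspose 1 = 1 := by
  ext p q
  simp only [partialTranspose, of_apply, one_apply, Prod.ext_iff]
  grind

theorem partialTranspose_tilesState : partialTranspose tilesState = tilesState := by
  change partialTransposeLinearMap tilesState = tilesState
  simp only [tilesState, map_smul, map_sub, map_sum]
  congr 2
  · exact partialTranspose_one
  · refine Finset.sum_congr rfl fun i _ => ?_
    obtain ⟨a, b, hb, hi⟩ := tiles_eq_tens i
    change partialTranspose (vecMulVec (tiles i) (star (tiles i))) = _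
    rw [hi]
    exact partialTranspose_vecMulVec_tens_star hb

theorem tilesState_is_ppt_state :
    tilesState.PosSemidef ∧ tilesState.trace = 1 ∧ (partialTranspose tilesState).PosSemidef := by
  have hpsd : tilesState.PosSemidef := by
    rw [tilesState_eq]
    exact (posSemidef_one_sub_mul_conjTranspose tiles_orthonormal).smul (by positivity)
  refine ⟨hpsd, ?_, partialTranspose_tilesState ▸ hpsd⟩
  rw [tilesState_eq, trace_smul, trace_sub, trace_mul_comm, tiles_orthonormal, trace_one, trace_one]
  norm_num
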